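/- Let k ≥ 1 and X ∈ 𝒳^{12k}_{η}. Then there exists a numerical constant C_k > 0 depending only on k such that for every j ≥ 1 and every n ≥ 1: E( | λ_j/λ̂_j − 1 |^{2k}·1{λ̂_j ≥ 1/n} ) ≤ C_k·η·( λ_j^{2k} + 1 )·n^{−k}, where λ̂_j := n⁻¹Σ_{i=1}^n [Xᵢ]_j². -/

import Mathlib

open Filter Real

noncomputable section

namespace CircularFLM

/-- A circular functional linear model, described through the Fourier coefficients of the
regressor with respect to the trigonometric basis of `L²[0,1]` (indices `j ≥ 1`), together
with an infinite i.i.d. sequence of copies `(ε_i, X_i)` generating the sample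
`(Y_i, X_i)` with `Y_i = ⟨β, X_i⟩ + σ ε_i`.  `Xc i j ω` is the `j`-th Fourier coefficient
`[X_i]_j` of the `i`-th copy of the regressor. -/
structure Model where
  Ω : Type
  [mΩ : MeasurableSpace Ω]
  P : MeasureTheory.Measure Ω
  [probP : MeasureTheory.IsProbabilityMeasure P]
  σ : ℝ
  σ_pos : 0 < σ
  /-- the eigenvalues `λ_j = E [X]_j²`, `j ≥ 1`, of the covariance operator -/
  lam : ℕ → ℝ
  lam_pos : ∀ j, 1 ≤ j → 0 < lam j
  lam_tendsto_zero : Tendsto lam atTop (nhds (0 : ℝ))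
  Xc : ℕ → ℕ → Ω → ℝ
  meas_Xc : ∀ i j, Measurable (Xc i j)
  eps : ℕ → Ω → ℝ
  meas_eps : ∀ i, Measurable (eps i)
  /-- `X` is centered -/
  Xc_centered : ∀ j, 1 ≤ j → ∫ ω, Xc 0 j ω ∂P = 0
  /-- second-order stationarity: the Fourier coefficients have variances `λ_j` ... -/
  Xc_var : ∀ j, 1 ≤ j → ∫ ω, (Xc 0 j ω) ^ 2 ∂P = lam j
  /-- ... and are uncorrelated -/
  Xc_uncorr : ∀ j k, 1 ≤ j → 1 ≤ k → j ≠ k → ∫ ω, Xc 0 j ω * Xc 0 k ω ∂P = 0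
  /-- `E‖X‖² < ∞` -/
  X_sq_int : MeasureTheory.Integrable (fun ω => ∑' j : ℕ, (Xc 0 (j + 1) ω) ^ 2) P
  /-- the error is centered with variance one ... -/
  eps_centered : ∫ ω, eps 0 ω ∂P = 0
  eps_var : ∫ ω, (eps 0 ω) ^ 2 ∂P = 1
  /-- ... and uncorrelated with the regressor -/
  eps_uncorr : ∀ j, 1 ≤ j → ∫ ω, eps 0 ω * Xc 0 j ω ∂P = 0
  /-- the copies `(ε_i, X_i)` are independent ... -/
  iid_indep : ProbabilityTheory.iIndepFun
    (fun i ω => ((eps i ω : ℝ), fun j => Xc i j ω)) P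
  /-- ... and identically distributed -/
  iid_ident : ∀ i : ℕ,
    MeasureTheory.Measure.map (fun ω => ((eps i ω : ℝ), fun j => Xc i j ω)) P
      = MeasureTheory.Measure.map (fun ω => ((eps 0 ω : ℝ), fun j => Xc 0 j ω)) P

open MeasureTheory ProbabilityTheory

attribute [instance] Model.mΩ Model.probP

/-- the response `Y_i = ⟨β, X_i⟩ + σ ε_i` for slope Fourier coefficients `b` -/
def Model.Y (M : Model) (b : ℕ → ℝ) (i : ℕ) (ω : M.Ω) : ℝ :=
  (∑' j : ℕ, b (j + 1) * M.Xc i (j + 1) ω) + M.σ * M.eps i ω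

/-- `σ_Y² = Var(Y)` -/
def Model.varY (M : Model) (b : ℕ → ℝ) : ℝ := variance (M.Y b 0) M.P

/-- `E‖X‖²` -/
def Model.EX2 (M : Model) : ℝ := ∫ ω, ∑' j : ℕ, (M.Xc 0 (j + 1) ω) ^ 2 ∂M.P

/-- `X ∈ 𝒳ᵏ_η`, i.e. `sup_j E|[X]_j/√λ_j|ᵏ ≤ η` -/
def Model.momX (M : Model) (k : ℕ) (η : ℝ) : Prop :=
  ∀ j, 1 ≤ j → Integrable (fun ω => |M.Xc 0 j ω / Real.sqrt (M.lam j)| ^ k) M.P ∧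
    ∫ ω, |M.Xc 0 j ω / Real.sqrt (M.lam j)| ^ k ∂M.P ≤ η

/-- `E|Y/σ_Y|ᵏ ≤ η` -/
def Model.momY (M : Model) (b : ℕ → ℝ) (k : ℕ) (η : ℝ) : Prop :=
  Integrable (fun ω => |M.Y b 0 ω / Real.sqrt (M.varY b)| ^ k) M.P ∧
    ∫ ω, |M.Y b 0 ω / Real.sqrt (M.varY b)| ^ k ∂M.P ≤ η

/-- the series `⟨β, X_i⟩ = Σ_j [β]_j [X_i]_j` converges almost surely -/
def Model.innerSummable (M : Model) (b : ℕ → ℝ) : Prop :=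
  ∀ i, ∀ᵐ ω ∂M.P, Summable (fun j : ℕ => b (j + 1) * M.Xc i (j + 1) ω)

/-- `[ĝ]_j = n⁻¹ Σ_i Y_i [X_i]_j` -/
def Model.ghat (M : Model) (b : ℕ → ℝ) (n j : ℕ) (ω : M.Ω) : ℝ :=
  (n : ℝ)⁻¹ * ∑ i ∈ Finset.range n, M.Y b i ω * M.Xc i j ω

/-- `λ̂_j = n⁻¹ Σ_i [X_i]_j²` -/
def Model.lamhat (M : Model) (n j : ℕ) (ω : M.Ω) : ℝ :=
  (n : ℝ)⁻¹ * ∑ i ∈ Finset.range n, (M.Xc i j ω) ^ 2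

/-- the `j`-th coefficient of `Φ̂_ĝ`, i.e. `([ĝ]_j/λ̂_j)·1{λ̂_j ≥ 1/n}` -/
def Model.phiGhat (M : Model) (b : ℕ → ℝ) (n j : ℕ) (ω : M.Ω) : ℝ :=
  if 1 / (n : ℝ) ≤ M.lamhat n j ω then M.ghat b n j ω / M.lamhat n j ω else 0

/-- the `j`-th coefficient of the orthogonal series estimator `β̂_m` -/
def Model.bhat (M : Model) (b : ℕ → ℝ) (n m j : ℕ) (ω : M.Ω) : ℝ :=
  if 1 ≤ j ∧ j ≤ m then M.phiGhat b n j ω else 0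

/-- the contrast `Υ(t) = ‖t‖²_ω − 2⟨t, Φ̂_ĝ⟩_ω` of a coefficient sequence `t` -/
def Model.contrast (M : Model) (w b : ℕ → ℝ) (n : ℕ) (t : ℕ → ℝ) (ω : M.Ω) : ℝ :=
  (∑' j : ℕ, w (j + 1) * t (j + 1) ^ 2)
    - 2 * ∑' j : ℕ, w (j + 1) * t (j + 1) * M.phiGhat b n (j + 1) ω

/-- the penalty `pen(m) = 192 σ_Y² η δ_m / n` -/
def Model.pen (M : Model) (b : ℕ → ℝ) (η : ℝ) (δ : ℕ → ℝ) (n m : ℕ) : ℝ :=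
  192 * M.varY b * η * δ m / n

/-- the `𝓕_ω`-risk `E‖β̂_{m̂} − β‖²_ω` of the estimator with (data-driven) dimension `mhat` -/
def Model.risk (M : Model) (w b : ℕ → ℝ) (n : ℕ) (mhat : M.Ω → ℕ) : ℝ :=
  ∫ ω, ∑' j : ℕ, w (j + 1) * (M.bhat b n (mhat ω) (j + 1) ω - b (j + 1)) ^ 2 ∂M.P

/-- `β ∈ 𝓕ʳ_γ`, the ellipsoid `‖β‖²_γ ≤ r` -/
def inEllipsoid (γ : ℕ → ℝ) (r : ℝ) (b : ℕ → ℝ) : Prop :=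
  Summable (fun j : ℕ => γ (j + 1) * b (j + 1) ^ 2) ∧
    ∑' j : ℕ, γ (j + 1) * b (j + 1) ^ 2 ≤ r

/-- Assumption 1 on the weight sequences `ω` (here `w`) and `γ` -/
def Assumption1 (w γ : ℕ → ℝ) : Prop :=
  (∀ j, 1 ≤ j → 0 < w j) ∧ (∀ j, 1 ≤ j → 0 < γ j) ∧ w 1 = 1 ∧ γ 1 = 1 ∧
    (∀ j k, 1 ≤ j → j ≤ k → (γ k)⁻¹ ≤ (γ j)⁻¹) ∧
    Tendsto (fun j => (γ j)⁻¹) atTop (nhds (0 : ℝ)) ∧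
    (∀ j k, 1 ≤ j → j ≤ k → w k / γ k ≤ w j / γ j) ∧
    Tendsto (fun j => w j / γ j) atTop (nhds (0 : ℝ))

/-- `M_n = argmax{1 ≤ M ≤ n : δ_M ≤ δ_1 n min(ω_M, 1)}` -/
def Mseq (w δ : ℕ → ℝ) (n : ℕ) : ℕ :=
  sSup {M : ℕ | 1 ≤ M ∧ M ≤ n ∧ δ M ≤ δ 1 * n * min (w M) 1}

/-- `N_n = argmax{1 ≤ N ≤ n : max_{1≤j≤N} ω_j ≤ n}` -/
def Nseq (w : ℕ → ℝ) (n : ℕ) : ℕ :=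
  sSup {N : ℕ | 1 ≤ N ∧ N ≤ n ∧ ∀ j, 1 ≤ j → j ≤ N → w j ≤ n}

/-- Assumption 2 on the sequences `δ`, `Δ` and `M = (M_n)` (relative to `λ` and `ω`) -/
def Assumption2 (lam w δ Δ : ℕ → ℝ) (Sig : ℝ) : Prop :=
  (∀ j k, 1 ≤ j → j ≤ k → δ j ≤ δ k) ∧ (∀ j k, 1 ≤ j → j ≤ k → Δ j ≤ Δ k) ∧
    (∀ m, 1 ≤ m → ∑ j ∈ Finset.Icc 1 m, w j / lam j ≤ δ m) ∧
    (∀ m, 1 ≤ m → ∀ j, 1 ≤ j → j ≤ m → w j / lam j ≤ Δ m) ∧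
    Summable (fun m : ℕ => Δ (m + 1) * Real.exp (-δ (m + 1) / (6 * Δ (m + 1)))) ∧
    (∑' m : ℕ, Δ (m + 1) * Real.exp (-δ (m + 1) / (6 * Δ (m + 1)))) ≤ Sig ∧
    (∀ n : ℕ, 1 ≤ n → ∀ j, 1 ≤ j → j ≤ Mseq w δ n → 2 / (n : ℝ) ≤ lam j)

/-- `m̂` is a minimizer of the penalized contrast over `{1, …, Mn}` -/
def Model.IsSelection (M : Model) (w b δ : ℕ → ℝ) (η : ℝ) (n Mn : ℕ)
    (mhat : M.Ω → ℕ) : Prop :=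
  Measurable mhat ∧ ∀ ω, (1 ≤ mhat ω ∧ mhat ω ≤ Mn) ∧
    ∀ m, 1 ≤ m → m ≤ Mn →
      M.contrast w b n (fun j => M.bhat b n (mhat ω) j ω) ω + M.pen b η δ n (mhat ω)
        ≤ M.contrast w b n (fun j => M.bhat b n m j ω) ω + M.pen b η δ n m

/-- `max_{1 ≤ j ≤ m} f j` -/
def maxIcc (f : ℕ → ℝ) (m : ℕ) : ℝ := sSup (f '' Set.Icc 1 m)

/-- the intrinsic choice `Δ_m = max_{1≤j≤m} ω_j/λ_j` -/
def intrinsicDelta (lam w : ℕ → ℝ) (m : ℕ) : ℝ := maxIcc (fun j => w j / lam j) m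

/-- the intrinsic `κ_m = max_{1≤j≤m} max(ω_j,1)/λ_j` -/
def intrinsicKappa (lam w : ℕ → ℝ) (m : ℕ) : ℝ := maxIcc (fun j => max (w j) 1 / lam j) m

/-- the intrinsic choice `δ_m = m Δ_m log(κ_m ∨ (m+2)) / log(m+2)` -/
def intrinsicdelta (lam w : ℕ → ℝ) (m : ℕ) : ℝ :=
  (m : ℝ) * intrinsicDelta lam w m
    * (Real.log (max (intrinsicKappa lam w m) ((m : ℝ) + 2)) / Real.log ((m : ℝ) + 2))

/-- the estimated `Δ̂_m` -/
def Model.Deltahat (M : Model) (w : ℕ → ℝ) (n m : ℕ) (ω : M.Ω) : ℝ :=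
  maxIcc (fun j => if 1 / (n : ℝ) ≤ M.lamhat n j ω then w j / M.lamhat n j ω else 0) m

/-- the estimated `κ̂_m` -/
def Model.kappahat (M : Model) (w : ℕ → ℝ) (n m : ℕ) (ω : M.Ω) : ℝ :=
  maxIcc (fun j => if 1 / (n : ℝ) ≤ M.lamhat n j ω then max (w j) 1 / M.lamhat n j ω else 0) m

/-- the estimated `δ̂_m` -/
def Model.deltahat (M : Model) (w : ℕ → ℝ) (n m : ℕ) (ω : M.Ω) : ℝ :=
  (m : ℝ) * M.Deltahat w n m ω
    * (Real.log (max (M.kappahat w n m ω) ((m : ℝ) + 2)) / Real.log ((m : ℝ) + 2))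

/-- the random penalty `p̂en(m) = 1920 σ_Y² η δ̂_m / n` -/
def Model.penhat (M : Model) (w b : ℕ → ℝ) (η : ℝ) (n m : ℕ) (ω : M.Ω) : ℝ :=
  1920 * M.varY b * η * M.deltahat w n m ω / n

/-- the random upper bound `M̂_n = argmax{1 ≤ M ≤ N_n : λ̂_M/(M max(ω_M,1)) ≥ (log n)/n}` -/
def Model.MhatSeq (M : Model) (w : ℕ → ℝ) (n : ℕ) (ω : M.Ω) : ℕ :=
  sSup {Mm : ℕ | 1 ≤ Mm ∧ Mm ≤ Nseq w n ∧
    Real.log n / n ≤ M.lamhat n Mm ω / (Mm * max (w Mm) 1)}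

/-- `m̂` is a minimizer of the fully data-driven penalized contrast over `{1, …, M̂_n}` -/
def Model.IsSelectionRand (M : Model) (w b : ℕ → ℝ) (η : ℝ) (n : ℕ)
    (mhat : M.Ω → ℕ) : Prop :=
  Measurable mhat ∧ ∀ ω, (1 ≤ mhat ω ∧ mhat ω ≤ M.MhatSeq w n ω) ∧
    ∀ m, 1 ≤ m → m ≤ M.MhatSeq w n ω →
      M.contrast w b n (fun j => M.bhat b n (mhat ω) j ω) ω + M.penhat w b η n (mhat ω) ω
        ≤ M.contrast w b n (fun j => M.bhat b n m j ω) ω + M.penhat w b η n m ω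

/-- Assumption 3 on `M = (M_n)`, `m† = (m†_n)` and `N = (N_n)` for the intrinsic sequences -/
def Assumption3 (lam w γ : ℕ → ℝ) (mdag : ℕ → ℕ) (ς : ℝ) : Prop :=
  (∀ n : ℕ, 1 ≤ n → ∀ j, 1 ≤ j → j ≤ Mseq w (intrinsicdelta lam w) n → 2 / (n : ℝ) ≤ lam j) ∧
    (∀ n : ℕ, 1 ≤ n → ∀ m : ℕ, Mseq w (intrinsicdelta lam w) n < m →
      lam m / (m * max (w m) 1) ≤ Real.log n / (2 * n)) ∧
    1 ≤ ς ∧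
    (∀ n : ℕ, 1 ≤ n → 1 ≤ mdag n ∧
      ς⁻¹ ≤ γ (mdag n) * intrinsicdelta lam w (mdag n) / (n * w (mdag n)) ∧
      γ (mdag n) * intrinsicdelta lam w (mdag n) / (n * w (mdag n)) ≤ ς) ∧
    (∀ n : ℕ, 1 ≤ n → ∀ m, 1 ≤ m → m ≤ mdag n →
      2 * Real.log n / n ≤ lam m / (m * max (w m) 1)) ∧
    (∀ n : ℕ, 1 ≤ n → Mseq w (intrinsicdelta lam w) n ≤ Nseq w n ∧ Nseq w n ≤ n)

/-- `sup_{t ∈ B_m} |⟨t, v⟩_ω|²` where `v` is (the coefficient sequence of) a function and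
`B_m` is the unit ball of `span(φ_1,…,φ_m)` w.r.t. `‖·‖_ω`  -/
def ballSup (w : ℕ → ℝ) (m : ℕ) (v : ℕ → ℝ) : ℝ :=
  sSup {x : ℝ | ∃ c : ℕ → ℝ, (∑ j ∈ Finset.Icc 1 m, w j * c j ^ 2) ≤ 1 ∧
    x = |∑ j ∈ Finset.Icc 1 m, w j * c j * v j| ^ 2}

/-- the event `Ω_{Y_i, X_i}` -/
def Model.goodEvent (M : Model) (b w δ : ℕ → ℝ) (n i : ℕ) : Set M.Ω :=
  {ω | |M.Y b i ω / Real.sqrt (M.varY b)| ≤ (n : ℝ) ^ ((1 : ℝ) / 6) ∧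
    ∀ j, 1 ≤ j → j ≤ Mseq w δ n → |M.Xc i j ω / Real.sqrt (M.lam j)| ≤ (n : ℝ) ^ ((1 : ℝ) / 6)}

/-- the Fourier coefficients `[ĥ]_j` -/
def Model.hhat (M : Model) (b w δ : ℕ → ℝ) (n j : ℕ) (ω : M.Ω) : ℝ :=
  (n : ℝ)⁻¹ * ∑ i ∈ Finset.range n,
    ((M.goodEvent b w δ n i).indicator (fun ω' => M.Y b i ω' * M.Xc i j ω') ω
      - ∫ ω', (M.goodEvent b w δ n i).indicator (fun ω' => M.Y b i ω' * M.Xc i j ω') ω' ∂M.P)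

/-- the Fourier coefficients `[f̂]_j` -/
def Model.fhat (M : Model) (b w δ : ℕ → ℝ) (n j : ℕ) (ω : M.Ω) : ℝ :=
  (n : ℝ)⁻¹ * ∑ i ∈ Finset.range n,
    ((M.goodEvent b w δ n i)ᶜ.indicator (fun ω' => M.Y b i ω' * M.Xc i j ω') ω
      - ∫ ω', (M.goodEvent b w δ n i)ᶜ.indicator (fun ω' => M.Y b i ω' * M.Xc i j ω') ω' ∂M.P)

end CircularFLM

/-!
Write `λ̂_j/λ_j − 1 = n⁻¹ ∑_{i<n} W_i` with `W_i = [X_i]_j²/λ_j − 1`, i.i.d. and centred, and put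
`c = η^{1/(6k)}`. The moment condition gives `E|W_i/(3c)|^s ≤ 1` for `s ≤ 6k`, and a Rosenthal-type
bound, proved by expanding `(S_n + W_n)^{2q}` binomially (independence factorises the terms and
centring kills the linear one), gives `E(λ̂_j/λ_j − 1)^{2q} ≤ A_q (3c)^{2q} n^{-q}` for `q ≤ 3k`.
On `{λ̂_j ≥ 1/n}` either `λ̂_j ≥ λ_j/2`, and then `|λ_j/λ̂_j − 1| ≤ 2|λ̂_j/λ_j − 1|`, or
`|λ̂_j/λ_j − 1| > 1/2` while `λ_j/λ̂_j ≤ nλ_j`. Hence the truncated moment is at most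
`E(2T)^{2k} + (nλ_j + 1)^{2k} E(2T)^{6k}` with `T = λ̂_j/λ_j − 1`, and both terms are `O(n^{-k})`.
-/

open MeasureTheory ProbabilityTheory

lemma pow_le_one_add_pow {u : ℝ} (hu : 0 ≤ u) {s m : ℕ} (hsm : s ≤ m) : u ^ s ≤ 1 + u ^ m := by
  rcases le_total u 1 with h | h
  · linarith [pow_le_one₀ hu h (n := s), pow_nonneg hu m]
  · linarith [pow_le_pow_right₀ h hsm]

lemma pow_succ_add_add_one_pow_le {x : ℝ} (hx : 0 ≤ x) (q : ℕ) :
    x ^ (q + 1) + (x + 1) ^ q ≤ (x + 1) ^ (q + 1) := by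
  have : x ^ q ≤ (x + 1) ^ q := pow_le_pow_left₀ hx (by linarith) q
  calc x ^ (q + 1) + (x + 1) ^ q = x * x ^ q + (x + 1) ^ q := by ring
    _ ≤ x * (x + 1) ^ q + (x + 1) ^ q := by gcongr
    _ = (x + 1) ^ (q + 1) := by ring

lemma ite_abs_div_sub_one_pow_le {a x N : ℝ} (ha : 0 < a) (hN : 0 < N) (p : ℕ) :
    (if 1 / N ≤ x then |a / x - 1| ^ (2 * p) else 0) ≤
      (2 * (x / a - 1)) ^ (2 * p) + (N * a + 1) ^ (2 * p) * (2 * (x / a - 1)) ^ (6 * p) := by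
  have h6 : Even (6 * p) := ⟨3 * p, by ring⟩
  have hsmall : 0 ≤ (2 * (x / a - 1)) ^ (2 * p) := (even_two_mul p).pow_nonneg _
  have hlarge : 0 ≤ (N * a + 1) ^ (2 * p) * (2 * (x / a - 1)) ^ (6 * p) :=
    mul_nonneg (pow_nonneg (by positivity) _) (h6.pow_nonneg _)
  split_ifs with hx
  case neg => exact add_nonneg hsmall hlarge
  have hx0 : 0 < x := lt_of_lt_of_le (by positivity) hx
  rcases le_or_gt (1 / 2) (x / a) with h | h
  · have hax : a / x ≤ 2 := by
      rw [div_le_iff₀ hx0]; rw [le_div_iff₀ ha] at h; linarith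
    have hclose : |a / x - 1| ≤ |2 * (x / a - 1)| := by
      rw [show a / x - 1 = -(x / a - 1) * (a / x) by field_simp; ring, abs_mul, abs_neg,
        abs_mul, abs_two, abs_of_pos (by positivity : 0 < a / x)]
      nlinarith [abs_nonneg (x / a - 1)]
    rw [← (even_two_mul p).pow_abs (2 * (x / a - 1))]
    linarith [pow_le_pow_left₀ (abs_nonneg _) hclose (2 * p)]
  · have hfar : |a / x - 1| ≤ N * a + 1 := by
      have hax : a / x ≤ N * a := by
        rw [div_le_iff₀ hx0]; rw [div_le_iff₀ hN] at hx; nlinarith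
      rw [abs_le]; constructor <;> nlinarith [div_pos ha hx0]
    have hone : 1 ≤ (2 * (x / a - 1)) ^ (6 * p) := by
      rw [← h6.pow_abs]
      exact one_le_pow₀ (by rw [abs_of_neg (by linarith)]; linarith)
    calc |a / x - 1| ^ (2 * p) ≤ (N * a + 1) ^ (2 * p) := pow_le_pow_left₀ (abs_nonneg _) hfar _
      _ ≤ (N * a + 1) ^ (2 * p) * (2 * (x / a - 1)) ^ (6 * p) :=
          le_mul_of_one_le_right (by positivity) hone
      _ ≤ _ := le_add_of_nonneg_left hsmall

lemma two_moment_terms_le {N a c A B : ℝ} (hN : 1 ≤ N) (ha : 0 ≤ a) (hc : 1 ≤ c) (hA : 0 ≤ A)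
    (hB : 0 ≤ B) (k : ℕ) :
    2 ^ (2 * k) * (A * (3 * c) ^ (2 * k) / N ^ k) +
        (N * a + 1) ^ (2 * k) * (2 ^ (6 * k) * (B * (3 * c) ^ (6 * k) / N ^ (3 * k))) ≤
      (6 ^ (2 * k) * A + 2 ^ (2 * k) * 6 ^ (6 * k) * B) * c ^ (6 * k) * (a ^ (2 * k) + 1) /
        N ^ k := by
  have h6 : ∀ r : ℕ, (6 : ℝ) ^ r = 2 ^ r * 3 ^ r := fun r => by rw [← mul_pow]; norm_num
  have ha1 : 1 ≤ a ^ (2 * k) + 1 := le_add_of_nonneg_left (pow_nonneg ha _)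
  have hsmall : 2 ^ (2 * k) * (A * (3 * c) ^ (2 * k) / N ^ k) ≤
      6 ^ (2 * k) * A * c ^ (6 * k) * (a ^ (2 * k) + 1) / N ^ k := by
    have hc' : c ^ (2 * k) ≤ c ^ (6 * k) * (a ^ (2 * k) + 1) :=
      (pow_le_pow_right₀ hc (by omega)).trans (le_mul_of_one_le_right (by positivity) ha1)
    calc _ = 6 ^ (2 * k) * A * c ^ (2 * k) / N ^ k := by rw [h6, mul_pow]; ring
      _ ≤ _ := by rw [mul_assoc _ (c ^ (6 * k))]; gcongr
  have hNa : (N * a + 1) ^ (2 * k) ≤ N ^ (2 * k) * (2 ^ (2 * k) * (a ^ (2 * k) + 1)) := by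
    calc (N * a + 1) ^ (2 * k) ≤ (N * (a + 1)) ^ (2 * k) :=
          pow_le_pow_left₀ (by positivity) (by nlinarith) _
      _ = N ^ (2 * k) * (a + 1) ^ (2 * k) := mul_pow _ _ _
      _ ≤ N ^ (2 * k) * (2 ^ (2 * k) * (a ^ (2 * k) + 1)) := by
          gcongr
          refine (add_pow_le ha zero_le_one _).trans ?_
          rw [one_pow]
          gcongr
          exacts [one_le_two, Nat.sub_le _ _]
  have hlarge : (N * a + 1) ^ (2 * k) * (2 ^ (6 * k) * (B * (3 * c) ^ (6 * k) / N ^ (3 * k))) ≤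
      2 ^ (2 * k) * 6 ^ (6 * k) * B * c ^ (6 * k) * (a ^ (2 * k) + 1) / N ^ k := by
    calc _ ≤ N ^ (2 * k) * (2 ^ (2 * k) * (a ^ (2 * k) + 1)) *
          (2 ^ (6 * k) * (B * (3 * c) ^ (6 * k) / N ^ (3 * k))) := by gcongr
      _ = _ := by
          rw [show 3 * k = 2 * k + k by ring, pow_add N, h6, mul_pow]
          field_simp
  calc _ ≤ _ := add_le_add hsmall hlarge
    _ = _ := by ring

def rosenthalConst : ℕ → ℝ
  | 0 => 1
  | q + 1 => 4 ^ (q + 1) * (1 + rosenthalConst q)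

lemma rosenthalConst_pos : ∀ q, 0 < rosenthalConst q
  | 0 => one_pos
  | q + 1 => by have := rosenthalConst_pos q; simp only [rosenthalConst]; positivity

lemma rosenthalConst_succ_mul_le (q : ℕ) {x : ℝ} (hx : 0 ≤ x) :
    rosenthalConst (q + 1) * x ^ (q + 1) + 4 ^ (q + 1) * (1 + rosenthalConst q * x ^ q) ≤
      rosenthalConst (q + 1) * (x + 1) ^ (q + 1) := by
  have hA := (rosenthalConst_pos q).le
  have h1 : 1 ≤ (x + 1) ^ q := one_le_pow₀ (by linarith)
  have h2 : x ^ q ≤ (x + 1) ^ q := pow_le_pow_left₀ hx (by linarith) q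
  have h3 : 1 + rosenthalConst q * x ^ q ≤ (1 + rosenthalConst q) * (x + 1) ^ q := by nlinarith
  calc _ ≤ rosenthalConst (q + 1) * x ^ (q + 1) + rosenthalConst (q + 1) * (x + 1) ^ q := by
        simp only [rosenthalConst]
        nlinarith [mul_le_mul_of_nonneg_left h3 (by positivity : (0 : ℝ) ≤ 4 ^ (q + 1))]
    _ ≤ _ := by
        rw [← mul_add]
        exact mul_le_mul_of_nonneg_left (pow_succ_add_add_one_pow_le hx q)
          (rosenthalConst_pos _).le

section Moments

variable {Ω : Type*} [MeasurableSpace Ω] {μ : Measure Ω}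

lemma memLp_of_integrable_abs_pow {f : Ω → ℝ} {m : ℕ} (hf : AEStronglyMeasurable f μ)
    (h : Integrable (fun ω => |f ω| ^ m) μ) : MemLp f m μ := by
  rcases eq_or_ne m 0 with rfl | hm
  · simpa using hf
  rw [← integrable_norm_rpow_iff hf (by exact_mod_cast hm) (by simp)]
  simpa [Real.rpow_natCast] using h

lemma MeasureTheory.MemLp.integrable_abs_pow [IsFiniteMeasure μ] {f : Ω → ℝ} {m s : ℕ}
    (hf : MemLp f m μ) (hsm : s ≤ m) : Integrable (fun ω => |f ω| ^ s) μ := by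
  simpa [Real.norm_eq_abs] using integrable_norm_pow_of_le hf.1 hsm hf.integrable_norm_pow'

lemma MeasureTheory.MemLp.integrable_pow [IsFiniteMeasure μ] {f : Ω → ℝ} {m s : ℕ}
    (hf : MemLp f m μ) (hsm : s ≤ m) : Integrable (fun ω => f ω ^ s) μ :=
  (hf.integrable_abs_pow hsm).mono' (hf.1.pow s) (ae_of_all _ fun ω => by simp)

variable [IsProbabilityMeasure μ]

lemma integral_abs_pow_le_one_add {f : Ω → ℝ} {m s : ℕ} (hf : MemLp f m μ) (hsm : s ≤ m) :
    ∫ ω, |f ω| ^ s ∂μ ≤ 1 + ∫ ω, |f ω| ^ m ∂μ := by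
  calc ∫ ω, |f ω| ^ s ∂μ ≤ ∫ ω, (1 + |f ω| ^ m) ∂μ :=
        integral_mono (hf.integrable_abs_pow hsm)
          ((integrable_const 1).add (hf.integrable_abs_pow le_rfl))
          fun ω => pow_le_one_add_pow (abs_nonneg _) hsm
    _ = 1 + ∫ ω, |f ω| ^ m ∂μ := by
        rw [integral_add (integrable_const 1) (hf.integrable_abs_pow le_rfl), integral_const]
        simp

lemma integral_abs_pow_le_two_mul_pow {f : Ω → ℝ} {m s : ℕ} {c : ℝ} (hc : 0 < c)
    (hf : MemLp f m μ) (hbound : ∫ ω, |f ω| ^ m ∂μ ≤ c ^ m) (hsm : s ≤ m) :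
    ∫ ω, |f ω| ^ s ∂μ ≤ 2 * c ^ s := by
  have hs : 0 < c ^ s := pow_pos hc s
  have h := integral_abs_pow_le_one_add (hf.mul_const c⁻¹) hsm
  simp_rw [abs_mul, abs_inv, abs_of_pos hc, mul_pow, integral_mul_const, inv_pow,
    ← div_eq_mul_inv, div_le_iff₀ hs] at h
  have hm : (∫ ω, |f ω| ^ m ∂μ) / c ^ m ≤ 1 := (div_le_one (pow_pos hc m)).2 hbound
  nlinarith [mul_le_mul_of_nonneg_right hm hs.le]

lemma integral_abs_sub_one_div_pow_le_one {f : Ω → ℝ} {m s : ℕ} {c : ℝ} (hc : 1 ≤ c)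
    (hf : MemLp f m μ) (hbound : ∫ ω, |f ω| ^ m ∂μ ≤ c ^ m) (hsm : s ≤ m) :
    ∫ ω, |(f ω - 1) / (3 * c)| ^ s ∂μ ≤ 1 := by
  rcases s with _ | s
  · simp
  have hc0 : 0 < c := by linarith
  have hpt : ∀ ω, |(f ω - 1) / (3 * c)| ^ (s + 1) ≤
      2 ^ s * (|f ω| ^ (s + 1) + 1) / (3 * c) ^ (s + 1) := fun ω => by
    rw [abs_div, abs_of_pos (by positivity : 0 < 3 * c), div_pow]
    gcongr
    calc |f ω - 1| ^ (s + 1) ≤ (|f ω| + 1) ^ (s + 1) :=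
          pow_le_pow_left₀ (abs_nonneg _) ((abs_sub _ _).trans_eq (by rw [abs_one])) _
      _ ≤ 2 ^ s * (|f ω| ^ (s + 1) + 1 ^ (s + 1)) := add_pow_le (abs_nonneg _) zero_le_one _
      _ = 2 ^ s * (|f ω| ^ (s + 1) + 1) := by rw [one_pow]
  have hint := (((hf.integrable_abs_pow hsm).add (integrable_const 1)).const_mul
    ((2 : ℝ) ^ s)).div_const ((3 * c) ^ (s + 1))
  have h23 : (2 : ℝ) ^ s ≤ 3 ^ s := pow_le_pow_left₀ (by norm_num) (by norm_num) s
  calc ∫ ω, |(f ω - 1) / (3 * c)| ^ (s + 1) ∂μ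
      ≤ ∫ ω, 2 ^ s * (|f ω| ^ (s + 1) + 1) / (3 * c) ^ (s + 1) ∂μ :=
        integral_mono_of_nonneg (ae_of_all _ fun ω => by positivity) hint (ae_of_all _ hpt)
    _ = 2 ^ s * ((∫ ω, |f ω| ^ (s + 1) ∂μ) + 1) / (3 * c) ^ (s + 1) := by
        rw [integral_div, integral_const_mul,
          integral_add (hf.integrable_abs_pow hsm) (integrable_const 1), integral_const]
        simp
    _ ≤ 2 ^ s * (2 * c ^ (s + 1) + c ^ (s + 1)) / (3 * c) ^ (s + 1) := by
        gcongr
        · exact integral_abs_pow_le_two_mul_pow hc0 hf hbound hsm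
        · exact one_le_pow₀ hc
    _ ≤ 1 := by
        rw [div_le_one (by positivity)]
        calc 2 ^ s * (2 * c ^ (s + 1) + c ^ (s + 1)) ≤ 3 ^ s * (3 * c ^ (s + 1)) := by
              gcongr; linarith
          _ = (3 * c) ^ (s + 1) := by ring

end Moments

section Independence

variable {Ω : Type*} [MeasurableSpace Ω] {μ : Measure Ω} [IsProbabilityMeasure μ]

lemma ProbabilityTheory.IndepFun.integral_add_pow {X Y : Ω → ℝ} {m : ℕ} (hXY : IndepFun X Y μ)
    (hX : MemLp X m μ) (hY : MemLp Y m μ) :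
    ∫ ω, (X ω + Y ω) ^ m ∂μ = ∑ r ∈ Finset.range (m + 1),
      (m.choose r : ℝ) * ((∫ ω, X ω ^ r ∂μ) * ∫ ω, Y ω ^ (m - r) ∂μ) := by
  have hindep : ∀ r, IndepFun (fun ω => X ω ^ r) (fun ω => Y ω ^ (m - r)) μ := fun r =>
    hXY.comp (measurable_id.pow_const r) (measurable_id.pow_const (m - r))
  simp_rw [add_pow]
  rw [integral_finsetSum]
  · refine Finset.sum_congr rfl fun r _ => ?_
    rw [integral_mul_const, (hindep r).integral_fun_mul_eq_mul_integral
      (hX.1.pow r) (hY.1.pow (m - r))]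
    ring
  · intro r hr
    have hrm : r ≤ m := Nat.lt_succ_iff.mp (Finset.mem_range.mp hr)
    exact ((hindep r).integrable_mul (hX.integrable_pow hrm)
      (hY.integrable_pow (Nat.sub_le m r))).mul_const _

lemma ProbabilityTheory.IndepFun.integral_add_pow_le {X Y : Ω → ℝ} {q : ℕ}
    (hXY : IndepFun X Y μ) (hX : MemLp X (2 * q + 2 : ℕ) μ) (hY : MemLp Y (2 * q + 2 : ℕ) μ)
    (hY0 : ∫ ω, Y ω ∂μ = 0) (hYmom : ∀ s ≤ 2 * q + 2, ∫ ω, |Y ω| ^ s ∂μ ≤ 1) :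
    ∫ ω, (X ω + Y ω) ^ (2 * q + 2) ∂μ ≤
      ∫ ω, X ω ^ (2 * q + 2) ∂μ + 4 ^ (q + 1) * (1 + ∫ ω, X ω ^ (2 * q) ∂μ) := by
  have hlow : ∀ r ∈ Finset.range (2 * q + 1),
      (∫ ω, X ω ^ r ∂μ) * ∫ ω, Y ω ^ (2 * q + 2 - r) ∂μ ≤ 1 + ∫ ω, X ω ^ (2 * q) ∂μ := by
    intro r hr
    have hr : r ≤ 2 * q := Nat.lt_succ_iff.mp (Finset.mem_range.mp hr)
    have hXr : |∫ ω, X ω ^ r ∂μ| ≤ 1 + ∫ ω, X ω ^ (2 * q) ∂μ := by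
      have hEven : ∫ ω, |X ω| ^ (2 * q) ∂μ = ∫ ω, X ω ^ (2 * q) ∂μ := by
        simp_rw [(even_two_mul q).pow_abs]
      rw [← hEven]
      refine abs_integral_le_integral_abs.trans (le_of_eq_of_le ?_
        (integral_abs_pow_le_one_add (hX.mono_exponent (by norm_cast; omega)) hr))
      simp_rw [abs_pow]
    have hYr : |∫ ω, Y ω ^ (2 * q + 2 - r) ∂μ| ≤ 1 := by
      refine abs_integral_le_integral_abs.trans (le_of_eq_of_le ?_ (hYmom _ (Nat.sub_le _ r)))
      simp_rw [abs_pow]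
    calc _ ≤ |(∫ ω, X ω ^ r ∂μ) * ∫ ω, Y ω ^ (2 * q + 2 - r) ∂μ| := le_abs_self _
      _ ≤ (1 + ∫ ω, X ω ^ (2 * q) ∂μ) * 1 := by
        rw [abs_mul]
        exact mul_le_mul hXr hYr (abs_nonneg _) ((abs_nonneg _).trans hXr)
      _ = _ := mul_one _
  have hchoose : ∑ r ∈ Finset.range (2 * q + 1), ((2 * q + 2).choose r : ℝ) ≤ 4 ^ (q + 1) := by
    have h := Finset.sum_le_sum_of_subset (f := fun r => (2 * q + 2).choose r)
      (Finset.range_subset_range.mpr (by omega : 2 * q + 1 ≤ 2 * q + 2 + 1))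
    rw [Nat.sum_range_choose] at h
    calc _ ≤ ((2 ^ (2 * q + 2) : ℕ) : ℝ) := by exact_mod_cast h
      _ = 4 ^ (q + 1) := by rw [← mul_add_one, pow_mul]; norm_num
  have hX2q : 0 ≤ 1 + ∫ ω, X ω ^ (2 * q) ∂μ := by
    have : 0 ≤ ∫ ω, X ω ^ (2 * q) ∂μ :=
      integral_nonneg fun ω => (even_two_mul q).pow_nonneg (X ω)
    linarith
  rw [hXY.integral_add_pow hX hY, Finset.sum_range_succ, Finset.sum_range_succ,
    show 2 * q + 2 - (2 * q + 1) = 1 by omega, Nat.sub_self, Nat.choose_self]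
  simp only [pow_one, hY0, pow_zero, integral_const, probReal_univ, smul_eq_mul, mul_zero,
    mul_one, add_zero, Nat.cast_one, one_mul]
  calc _ ≤ ∑ r ∈ Finset.range (2 * q + 1), ((2 * q + 2).choose r : ℝ) *
          (1 + ∫ ω, X ω ^ (2 * q) ∂μ) + ∫ ω, X ω ^ (2 * q + 2) ∂μ := by
        gcongr with r hr
        exact hlow r hr
    _ ≤ 4 ^ (q + 1) * (1 + ∫ ω, X ω ^ (2 * q) ∂μ) + ∫ ω, X ω ^ (2 * q + 2) ∂μ := by
        rw [← Finset.sum_mul]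
        gcongr
    _ = _ := add_comm _ _

theorem integral_sum_range_pow_le {W : ℕ → Ω → ℝ} (hmeas : ∀ i, Measurable (W i))
    (hind : iIndepFun W μ) (hmean : ∀ i, ∫ ω, W i ω ∂μ = 0) {q : ℕ}
    (hmem : ∀ i, MemLp (W i) (2 * q : ℕ) μ)
    (hmom : ∀ i, ∀ s ≤ 2 * q, ∫ ω, |W i ω| ^ s ∂μ ≤ 1) (n : ℕ) :
    ∫ ω, (∑ i ∈ Finset.range n, W i ω) ^ (2 * q) ∂μ ≤ rosenthalConst q * n ^ q := by
  induction q generalizing n with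
  | zero => simp [rosenthalConst]
  | succ q ih =>
    have hlow := ih (fun i => (hmem i).mono_exponent (by norm_cast; omega))
      (fun i s hs => hmom i s (by omega))
    rw [mul_add_one] at hmem hmom ⊢
    induction n with
    | zero => simp
    | succ n ihn =>
      have hindep : IndepFun (fun ω => ∑ i ∈ Finset.range n, W i ω) (W n) μ := by
        simpa [Finset.sum_fn] using hind.indepFun_sum_range_succ hmeas n
      have hS : MemLp (fun ω => ∑ i ∈ Finset.range n, W i ω) (2 * q + 2 : ℕ) μ :=
        memLp_finsetSum _ fun i _ => hmem i
      simp_rw [Finset.sum_range_succ]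
      calc _ ≤ _ := hindep.integral_add_pow_le hS (hmem n) (hmean n) (hmom n)
        _ ≤ rosenthalConst (q + 1) * n ^ (q + 1) +
            4 ^ (q + 1) * (1 + rosenthalConst q * n ^ q) :=
          add_le_add ihn (by gcongr; exact hlow n)
        _ ≤ _ := by
          push_cast
          exact rosenthalConst_succ_mul_le q n.cast_nonneg

end Independence

namespace CircularFLM

def Model.sqDev (M : Model) (j i : ℕ) (ω : M.Ω) : ℝ := M.Xc i j ω ^ 2 / M.lam j - 1

lemma Model.measurable_sqDev (M : Model) (j i : ℕ) : Measurable (M.sqDev j i) :=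
  (((M.meas_Xc i j).pow_const 2).div_const _).sub_const 1

lemma Model.lamhat_div_sub_one (M : Model) {j n : ℕ} (hj : 1 ≤ j) (hn : n ≠ 0) (ω : M.Ω) :
    M.lamhat n j ω / M.lam j - 1 = (n : ℝ)⁻¹ * ∑ i ∈ Finset.range n, M.sqDev j i ω := by
  have hlam := (M.lam_pos j hj).ne'
  simp only [Model.lamhat, Model.sqDev, Finset.sum_sub_distrib, Finset.sum_const,
    Finset.card_range, nsmul_eq_mul, mul_one, ← Finset.sum_div]
  field_simp

lemma Model.iIndepFun_sqDev (M : Model) (j : ℕ) : iIndepFun (M.sqDev j) M.P :=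
  M.iid_indep.comp (fun _ p => p.2 j ^ 2 / M.lam j - 1) fun _ => by fun_prop

lemma Model.identDistrib_sqDev (M : Model) (j i : ℕ) :
    IdentDistrib (M.sqDev j i) (M.sqDev j 0) M.P M.P := by
  have hmeas : ∀ l, Measurable fun ω => (M.eps l ω, fun j => M.Xc l j ω) := fun l =>
    (M.meas_eps l).prodMk (measurable_pi_lambda _ (M.meas_Xc l))
  have hpair : IdentDistrib (fun ω => (M.eps i ω, fun j => M.Xc i j ω))
      (fun ω => (M.eps 0 ω, fun j => M.Xc 0 j ω)) M.P M.P :=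
    ⟨(hmeas i).aemeasurable, (hmeas 0).aemeasurable, M.iid_ident i⟩
  exact hpair.comp (u := fun p => p.2 j ^ 2 / M.lam j - 1) (by fun_prop)

lemma Model.integral_sqDev (M : Model) {j : ℕ} (hj : 1 ≤ j) : ∫ ω, M.sqDev j 0 ω ∂M.P = 0 := by
  have hvar := M.Xc_var j hj
  have hlam := M.lam_pos j hj
  -- a non-integrable function would have integral `0 ≠ λ_j`
  have hint : Integrable (fun ω => M.Xc 0 j ω ^ 2) M.P :=
    .of_integral_ne_zero (by rw [hvar]; exact hlam.ne')
  simp only [Model.sqDev]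
  rw [integral_sub (hint.div_const _) (integrable_const 1), integral_div, hvar,
    div_self hlam.ne']
  simp

lemma Model.momX_sq (M : Model) {j m : ℕ} {η : ℝ} (hj : 1 ≤ j) (hX : M.momX (2 * m) η) :
    MemLp (fun ω => M.Xc 0 j ω ^ 2 / M.lam j) m M.P ∧
      ∫ ω, |M.Xc 0 j ω ^ 2 / M.lam j| ^ m ∂M.P ≤ η := by
  have hsq : (fun ω => |M.Xc 0 j ω / Real.sqrt (M.lam j)| ^ (2 * m)) =
      fun ω => |M.Xc 0 j ω ^ 2 / M.lam j| ^ m := funext fun ω => by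
    rw [pow_mul, sq_abs, div_pow, Real.sq_sqrt (M.lam_pos j hj).le,
      abs_of_nonneg (div_nonneg (sq_nonneg _) (M.lam_pos j hj).le)]
  obtain ⟨hint, hbound⟩ := hX j hj
  rw [hsq] at hint hbound
  exact ⟨memLp_of_integrable_abs_pow
    (((M.meas_Xc 0 j).pow_const 2).div_const _).aestronglyMeasurable hint, hbound⟩

lemma Model.memLp_sqDev (M : Model) {j m : ℕ} {η : ℝ} (hj : 1 ≤ j) (hX : M.momX (2 * m) η)
    (i : ℕ) : MemLp (M.sqDev j i) m M.P :=
  (M.identDistrib_sqDev j i).memLp_iff.2 ((M.momX_sq hj hX).1.sub (memLp_const 1))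

lemma Model.memLp_lamhat_div_sub_one (M : Model) {j m n : ℕ} {η : ℝ} (hj : 1 ≤ j)
    (hX : M.momX (2 * m) η) (hn : n ≠ 0) :
    MemLp (fun ω => M.lamhat n j ω / M.lam j - 1) m M.P := by
  simp_rw [M.lamhat_div_sub_one hj hn]
  exact (memLp_finsetSum _ fun i _ => M.memLp_sqDev hj hX i).const_mul _

theorem Model.integral_lamhat_div_sub_one_pow_le (M : Model) {j m n p : ℕ} {c : ℝ} (hj : 1 ≤ j)
    (hc : 1 ≤ c) (hX : M.momX (2 * m) (c ^ m)) (hn : n ≠ 0) (hp : 2 * p ≤ m) :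
    ∫ ω, (M.lamhat n j ω / M.lam j - 1) ^ (2 * p) ∂M.P ≤
      rosenthalConst p * (3 * c) ^ (2 * p) / n ^ p := by
  set W : ℕ → M.Ω → ℝ := fun i ω => M.sqDev j i ω / (3 * c) with hW
  have hident : ∀ i, IdentDistrib (W i) (W 0) M.P M.P := fun i =>
    (M.identDistrib_sqDev j i).comp (measurable_id.div_const _)
  have hmean : ∀ i, ∫ ω, W i ω ∂M.P = 0 := fun i => by
    rw [(hident i).integral_eq, hW, integral_div, M.integral_sqDev hj, zero_div]
  have hmem : ∀ i, MemLp (W i) (2 * p : ℕ) M.P := fun i =>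
    ((M.memLp_sqDev hj hX i).mono_exponent (by exact_mod_cast hp)).mul_const _
  have hmom : ∀ i, ∀ s ≤ 2 * p, ∫ ω, |W i ω| ^ s ∂M.P ≤ 1 := fun i s hs =>
    ((hident i).comp (continuous_abs.measurable.pow_const s)).integral_eq.trans_le
      (integral_abs_sub_one_div_pow_le_one hc (M.momX_sq hj hX).1 (M.momX_sq hj hX).2 (by omega))
  have hsum := integral_sum_range_pow_le (fun i => (M.measurable_sqDev j i).div_const _)
    ((M.iIndepFun_sqDev j).comp _ fun _ => measurable_id.div_const (3 * c)) hmean hmem hmom n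
  have hT : ∀ ω, M.lamhat n j ω / M.lam j - 1 = 3 * c / n * ∑ i ∈ Finset.range n, W i ω :=
    fun ω => by
      rw [M.lamhat_div_sub_one hj hn, hW, ← Finset.sum_div]
      field_simp
  simp_rw [hT, mul_pow (3 * c / (n : ℝ)), integral_const_mul]
  calc (3 * c / n) ^ (2 * p) * ∫ ω, (∑ i ∈ Finset.range n, W i ω) ^ (2 * p) ∂M.P
      ≤ (3 * c / n) ^ (2 * p) * (rosenthalConst p * n ^ p) := by gcongr
    _ = rosenthalConst p * (3 * c) ^ (2 * p) / n ^ p := by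
        rw [div_pow, pow_mul (n : ℝ)]
        field_simp
        ring

theorem Model.integral_ite_abs_div_lamhat_sub_one_pow_le (M : Model) {j n p : ℕ} {η : ℝ}
    (hj : 1 ≤ j) (hX : M.momX (2 * (6 * p)) η) (hn : n ≠ 0) :
    ∫ ω, (if 1 / (n : ℝ) ≤ M.lamhat n j ω
        then |M.lam j / M.lamhat n j ω - 1| ^ (2 * p) else 0) ∂M.P ≤
      2 ^ (2 * p) * ∫ ω, (M.lamhat n j ω / M.lam j - 1) ^ (2 * p) ∂M.P +
        (n * M.lam j + 1) ^ (2 * p) *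
          (2 ^ (6 * p) * ∫ ω, (M.lamhat n j ω / M.lam j - 1) ^ (6 * p) ∂M.P) := by
  have hT := M.memLp_lamhat_div_sub_one hj hX hn
  have hT2 := (hT.const_mul 2).integrable_pow (s := 2 * p) (by omega)
  have hT6 := (hT.const_mul 2).integrable_pow (s := 6 * p) le_rfl
  calc _ ≤ ∫ ω, ((2 * (M.lamhat n j ω / M.lam j - 1)) ^ (2 * p) +
          (n * M.lam j + 1) ^ (2 * p) * (2 * (M.lamhat n j ω / M.lam j - 1)) ^ (6 * p)) ∂M.P :=
        integral_mono_of_nonneg (ae_of_all _ fun ω => by split_ifs <;> positivity)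
          (hT2.add (hT6.const_mul _))
          (ae_of_all _ fun ω => ite_abs_div_sub_one_pow_le (M.lam_pos j hj) (by positivity) p)
    _ = _ := by
        rw [integral_add hT2 (hT6.const_mul _), integral_const_mul]
        simp_rw [mul_pow (2 : ℝ), integral_const_mul]

/-- Lemma A.4, bound (A.11): moments of `λ_j/λ̂_j − 1` on the event `{λ̂_j ≥ 1/n}`. -/
theorem statement15 :
    ∀ k : ℕ, 1 ≤ k → ∃ C : ℝ, 0 < C ∧
      ∀ (M : Model) (η : ℝ), 1 ≤ η → M.momX (12 * k) η →
        ∀ j n : ℕ, 1 ≤ j → 1 ≤ n →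
          ∫ ω, (if 1 / (n : ℝ) ≤ M.lamhat n j ω
              then |M.lam j / M.lamhat n j ω - 1| ^ (2 * k) else 0) ∂M.P
            ≤ C * η * (M.lam j ^ (2 * k) + 1) / (n : ℝ) ^ k := by
  intro k hk
  refine ⟨6 ^ (2 * k) * rosenthalConst k + 2 ^ (2 * k) * 6 ^ (6 * k) * rosenthalConst (3 * k),
    by have := rosenthalConst_pos k; have := rosenthalConst_pos (3 * k); positivity, ?_⟩
  intro M η hη hX j n hj hn
  obtain ⟨c, hc, rfl⟩ : ∃ c : ℝ, 1 ≤ c ∧ c ^ (6 * k) = η :=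
    ⟨η ^ ((6 * k : ℕ)⁻¹ : ℝ), Real.one_le_rpow hη (by positivity),
      Real.rpow_inv_natCast_pow (by linarith) (by omega)⟩
  rw [show 12 * k = 2 * (6 * k) by ring] at hX
  have hn0 : n ≠ 0 := by omega
  have hlam := M.lam_pos j hj
  have hsmall := M.integral_lamhat_div_sub_one_pow_le hj hc hX hn0 (p := k) (by omega)
  have hlarge := M.integral_lamhat_div_sub_one_pow_le hj hc hX hn0 (p := 3 * k) (by omega)
  rw [show 2 * (3 * k) = 6 * k by ring] at hlarge
  calc _ ≤ _ := M.integral_ite_abs_div_lamhat_sub_one_pow_le hj hX hn0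
    _ ≤ 2 ^ (2 * k) * (rosenthalConst k * (3 * c) ^ (2 * k) / n ^ k) +
          (n * M.lam j + 1) ^ (2 * k) *
            (2 ^ (6 * k) * (rosenthalConst (3 * k) * (3 * c) ^ (6 * k) / n ^ (3 * k))) := by
        gcongr
    _ ≤ _ := two_moment_terms_le (by exact_mod_cast hn) hlam.le hc
          (rosenthalConst_pos k).le (rosenthalConst_pos _).le k

end CircularFLM
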